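/- Let k be a field, M a finite-dimensional k-vector space, and Φ a k-linear automorphism of M ⊗ M satisfying the pentagon equation. For ω ∈ End(M)* set λ(ω) = (ω ⊗ id)(Φ) and ρ(ω) = (id ⊗ ω)(Φ), where Φ is regarded as an element of End(M) ⊗ End(M). Define Δ_l(x) = Φ ∘ (x ⊗ id_M) ∘ Φ⁻¹ and Δ_r(x) = Φ⁻¹ ∘ (id_M ⊗ x) ∘ Φ for x ∈ End(M), regarded as elements of End(M) ⊗ End(M), and define the products ω *_r ω' = (ω ⊗ ω') ∘ Δ_r and ω *_l ω' = (ω ⊗ ω') ∘ Δ_l on End(M)*. Then for all ω, ω' ∈ End(M)*: (i) λ(ω) ∘ λ(ω') = λ(ω *_r ω'); (ii) ρ(ω) ∘ ρ(ω') = ρ(ω *_l ω'); (iii) Δ_l(λ(ω)) = (ω ⊗ id ⊗ id)(Φ_{12} ∘ Φ_{13}) in End(M) ⊗ End(M); (iv) Δ_r(ρ(ω)) = (id ⊗ id ⊗ ω)(Φ_{13} ∘ Φ_{23}) in End(M) ⊗ End(M). -/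
import Mathlib


open TensorProduct

noncomputable section
set_option linter.unusedSectionVars false
set_option synthInstance.maxHeartbeats 1000000
set_option maxHeartbeats 4000000
set_option maxRecDepth 4000

variable {k : Type*} [Field k]

/-- Apply `G` to tensor factors 1 and 2 of a triple tensor product. -/
def m12 {A B C P Q : Type*}
    [AddCommGroup A] [AddCommGroup B] [AddCommGroup C] [AddCommGroup P] [AddCommGroup Q]
    [Module k A] [Module k B] [Module k C] [Module k P] [Module k Q]
    (G : A ⊗[k] B →ₗ[k] P ⊗[k] Q) :
    A ⊗[k] (B ⊗[k] C) →ₗ[k] P ⊗[k] (Q ⊗[k] C) :=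
  (TensorProduct.assoc k P Q C).toLinearMap ∘ₗ G.rTensor C ∘ₗ
    (TensorProduct.assoc k A B C).symm.toLinearMap

/-- Apply `G` to tensor factors 2 and 3 of a triple tensor product. -/
def m23 {A B C Q R : Type*}
    [AddCommGroup A] [AddCommGroup B] [AddCommGroup C] [AddCommGroup Q] [AddCommGroup R]
    [Module k A] [Module k B] [Module k C] [Module k Q] [Module k R]
    (G : B ⊗[k] C →ₗ[k] Q ⊗[k] R) :
    A ⊗[k] (B ⊗[k] C) →ₗ[k] A ⊗[k] (Q ⊗[k] R) :=
  G.lTensor A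

/-- Apply `G` to tensor factors 1 and 3 of a triple tensor product. -/
def m13 {A B C P R : Type*}
    [AddCommGroup A] [AddCommGroup B] [AddCommGroup C] [AddCommGroup P] [AddCommGroup R]
    [Module k A] [Module k B] [Module k C] [Module k P] [Module k R]
    (G : A ⊗[k] C →ₗ[k] P ⊗[k] R) :
    A ⊗[k] (B ⊗[k] C) →ₗ[k] P ⊗[k] (B ⊗[k] R) :=
  ((TensorProduct.comm k R B).toLinearMap.lTensor P) ∘ₗ
    (TensorProduct.assoc k P R B).toLinearMap ∘ₗ G.rTensor B ∘ₗ
    (TensorProduct.assoc k A C B).symm.toLinearMap ∘ₗ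
    ((TensorProduct.comm k B C).toLinearMap.lTensor A)

/-- The modified pentagon equation for a pair `(F, Φ)`:
`F₁₂ ∘ F₁₃ ∘ Φ₂₃ = F₂₃ ∘ F₁₂` as maps `V ⊗ M ⊗ M → V ⊗ V ⊗ V`. -/
def MPE {V M : Type*} [AddCommGroup V] [AddCommGroup M] [Module k V] [Module k M]
    (F : V ⊗[k] M →ₗ[k] V ⊗[k] V) (Φ : M ⊗[k] M →ₗ[k] M ⊗[k] M) : Prop :=
  m12 F ∘ₗ m13 F ∘ₗ m23 Φ = m23 F ∘ₗ m12 F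

/-- The pentagon equation: `Φ₁₂ ∘ Φ₁₃ ∘ Φ₂₃ = Φ₂₃ ∘ Φ₁₂` on `M ⊗ M ⊗ M`. -/
def PE {M : Type*} [AddCommGroup M] [Module k M]
    (Φ : M ⊗[k] M →ₗ[k] M ⊗[k] M) : Prop :=
  m12 Φ ∘ₗ m13 Φ ∘ₗ m23 Φ = m23 Φ ∘ₗ m12 Φ

section PentagonEnd

variable {M : Type*} [AddCommGroup M] [Module k M] [FiniteDimensional k M]

/-- The canonical identification `End(M) ⊗ End(M) ≃ End(M ⊗ M)`. -/
noncomputable def e2 (M : Type*) [AddCommGroup M] [Module k M] [FiniteDimensional k M] :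
    (Module.End k M) ⊗[k] (Module.End k M) ≃ₗ[k] Module.End k (M ⊗[k] M) :=
  homTensorHomEquiv k M M M M

/-- The canonical identification `End(M) ⊗ (End(M) ⊗ End(M)) ≃ End(M ⊗ (M ⊗ M))`. -/
noncomputable def e3 (M : Type*) [AddCommGroup M] [Module k M] [FiniteDimensional k M] :
    (Module.End k M) ⊗[k] ((Module.End k M) ⊗[k] (Module.End k M)) ≃ₗ[k]
      Module.End k (M ⊗[k] (M ⊗[k] M)) :=
  TensorProduct.congr (LinearEquiv.refl k (Module.End k M)) (e2 M) ≪≫ₗ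
    homTensorHomEquiv k M (M ⊗[k] M) M (M ⊗[k] M)

variable (Φ : M ⊗[k] M ≃ₗ[k] M ⊗[k] M)

/-- `λ(ω) = (ω ⊗ id)(Φ)`, where `Φ` is regarded as an element of `End(M) ⊗ End(M)`. -/
noncomputable def lam (ω : Module.Dual k (Module.End k M)) : Module.End k M :=
  TensorProduct.lid k (Module.End k M)
    (TensorProduct.map ω LinearMap.id ((e2 M).symm Φ.toLinearMap))

/-- `ρ(ω) = (id ⊗ ω)(Φ)`, where `Φ` is regarded as an element of `End(M) ⊗ End(M)`. -/
noncomputable def rho (ω : Module.Dual k (Module.End k M)) : Module.End k M :=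
  TensorProduct.rid k (Module.End k M)
    (TensorProduct.map LinearMap.id ω ((e2 M).symm Φ.toLinearMap))

/-- The comultiplication `Δ_l(x) = Φ ∘ (x ⊗ id_M) ∘ Φ⁻¹`, as a linear map
`End(M) → End(M ⊗ M)`. -/
noncomputable def deltaL : Module.End k M →ₗ[k] Module.End k (M ⊗[k] M) :=
  (LinearEquiv.conj Φ).toLinearMap ∘ₗ
    LinearMap.rTensorHom (R := k) (N := M) (P := M) M

/-- The comultiplication `Δ_r(x) = Φ⁻¹ ∘ (id_M ⊗ x) ∘ Φ`, as a linear map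
`End(M) → End(M ⊗ M)`. -/
noncomputable def deltaR : Module.End k M →ₗ[k] Module.End k (M ⊗[k] M) :=
  (LinearEquiv.conj Φ.symm).toLinearMap ∘ₗ
    LinearMap.lTensorHom (R := k) (N := M) (P := M) M

/-- The product `ω *_r ω' = (ω ⊗ ω') ∘ Δ_r` on `End(M)*`. -/
noncomputable def dualMulR (ω ω' : Module.Dual k (Module.End k M)) :
    Module.Dual k (Module.End k M) :=
  (TensorProduct.lid k k).toLinearMap ∘ₗ TensorProduct.map ω ω' ∘ₗ
    (e2 M).symm.toLinearMap ∘ₗ deltaR Φ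

/-- The product `ω *_l ω' = (ω ⊗ ω') ∘ Δ_l` on `End(M)*`. -/
noncomputable def dualMulL (ω ω' : Module.Dual k (Module.End k M)) :
    Module.Dual k (Module.End k M) :=
  (TensorProduct.lid k k).toLinearMap ∘ₗ TensorProduct.map ω ω' ∘ₗ
    (e2 M).symm.toLinearMap ∘ₗ deltaL Φ

section AuxM
variable {M : Type*} [AddCommGroup M] [Module k M] [FiniteDimensional k M]

local notation "E" => Module.End k M

-- multiplication helpers with the elaboration used in goals
lemma tp2_zero_mul (t : E ⊗[k] E) : (0 : E ⊗[k] E) * t = 0 := zero_mul t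
lemma tp2_mul_zero (t : E ⊗[k] E) : t * (0 : E ⊗[k] E) = 0 := mul_zero t
lemma tp2_add_mul (s t u : E ⊗[k] E) : (s + t) * u = s * u + t * u := by exact Distrib.right_distrib s t u
lemma tp2_mul_add (s t u : E ⊗[k] E) : s * (t + u) = s * t + s * u := by exact Distrib.left_distrib s t u
lemma tp2_mul_assoc (s t u : E ⊗[k] E) : s * t * u = s * (t * u) := mul_assoc s t u
lemma tp2_one_mul (t : E ⊗[k] E) : (1 : E ⊗[k] E) * t = t := one_mul t
lemma tp2_mul_one (t : E ⊗[k] E) : t * (1 : E ⊗[k] E) = t := mul_one t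
lemma tp2_smul_mul (c : k) (s t : E ⊗[k] E) : (c • s) * t = c • (s * t) := smul_mul_assoc c s t
lemma tp2_mul_smul (c : k) (s t : E ⊗[k] E) : s * (c • t) = c • (s * t) := mul_smul_comm c s t

lemma tp3_zero_mul (t : E ⊗[k] (E ⊗[k] E)) : (0 : E ⊗[k] (E ⊗[k] E)) * t = 0 := zero_mul t
lemma tp3_mul_zero (t : E ⊗[k] (E ⊗[k] E)) : t * (0 : E ⊗[k] (E ⊗[k] E)) = 0 := mul_zero t
lemma tp3_add_mul (s t u : E ⊗[k] (E ⊗[k] E)) : (s + t) * u = s * u + t * u := by exact Distrib.right_distrib s t u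
lemma tp3_mul_add (s t u : E ⊗[k] (E ⊗[k] E)) : s * (t + u) = s * t + s * u := by exact Distrib.left_distrib s t u
lemma tp3_mul_assoc (s t u : E ⊗[k] (E ⊗[k] E)) : s * t * u = s * (t * u) := mul_assoc s t u
lemma tp3_one_mul (t : E ⊗[k] (E ⊗[k] E)) : (1 : E ⊗[k] (E ⊗[k] E)) * t = t := one_mul t
lemma tp3_mul_one (t : E ⊗[k] (E ⊗[k] E)) : t * (1 : E ⊗[k] (E ⊗[k] E)) = t := mul_one t
lemma tp3_smul_mul (c : k) (s t : E ⊗[k] (E ⊗[k] E)) : (c • s) * t = c • (s * t) :=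
  smul_mul_assoc c s t
lemma tp3_mul_smul (c : k) (s t : E ⊗[k] (E ⊗[k] E)) : s * (c • t) = c • (s * t) :=
  mul_smul_comm c s t

end AuxM

section AuxM2
variable {M : Type*} [AddCommGroup M] [Module k M] [FiniteDimensional k M]

local notation "E" => Module.End k M

lemma e2_tmul (x y : E) : e2 M (x ⊗ₜ[k] y) = TensorProduct.map x y := by
  simp [e2, homTensorHomEquiv_apply]

lemma e2_mul (s t : E ⊗[k] E) : e2 M (s * t) = e2 M s * e2 M t := by
  induction s using TensorProduct.induction_on with
  | zero => simp only [tp2_zero_mul, map_zero, zero_mul]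
  | tmul x y =>
    induction t using TensorProduct.induction_on with
    | zero => simp only [tp2_mul_zero, map_zero, mul_zero]
    | tmul x' y' => simp only [Algebra.TensorProduct.tmul_mul_tmul, e2_tmul,
        Module.End.mul_eq_comp, ← TensorProduct.map_comp]
    | add _ _ h1 h2 => simp only [tp2_mul_add, map_add, h1, h2, mul_add]
  | add _ _ h1 h2 => simp only [tp2_add_mul, map_add, h1, h2, add_mul]

lemma e2_one : e2 (k := k) M 1 = 1 := by
  simp [Algebra.TensorProduct.one_def, e2_tmul, Module.End.one_eq_id]

lemma e3_tmul (x : E) (u : E ⊗[k] E) :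
    e3 M (x ⊗ₜ[k] u) = TensorProduct.map x (e2 M u) := by
  simp [e3, homTensorHomEquiv_apply]

lemma e3_mul (s t : E ⊗[k] (E ⊗[k] E)) : e3 M (s * t) = e3 M s * e3 M t := by
  induction s using TensorProduct.induction_on with
  | zero => simp only [tp3_zero_mul, map_zero, zero_mul]
  | tmul x u =>
    induction t using TensorProduct.induction_on with
    | zero => simp only [tp3_mul_zero, map_zero, mul_zero]
    | tmul y v => simp only [Algebra.TensorProduct.tmul_mul_tmul, e3_tmul, e2_mul,
        Module.End.mul_eq_comp, ← TensorProduct.map_comp]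
    | add _ _ h1 h2 => simp only [tp3_mul_add, map_add, h1, h2, mul_add]
  | add _ _ h1 h2 => simp only [tp3_add_mul, map_add, h1, h2, add_mul]

/-- `x ⊗ y ↦ x ⊗ (y ⊗ 1)` -/
noncomputable def pj12 : E ⊗[k] E →ₗ[k] E ⊗[k] (E ⊗[k] E) :=
  TensorProduct.map LinearMap.id ((TensorProduct.mk k E E).flip 1)

/-- `x ⊗ z ↦ x ⊗ (1 ⊗ z)` -/
noncomputable def pj13 : E ⊗[k] E →ₗ[k] E ⊗[k] (E ⊗[k] E) :=
  TensorProduct.map LinearMap.id (TensorProduct.mk k E E 1)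

/-- `t ↦ 1 ⊗ t` -/
noncomputable def pj23 : E ⊗[k] E →ₗ[k] E ⊗[k] (E ⊗[k] E) :=
  TensorProduct.mk k E (E ⊗[k] E) 1

@[simp] lemma pj12_tmul (x y : E) :
    pj12 (x ⊗ₜ[k] y) = x ⊗ₜ[k] (y ⊗ₜ[k] (1 : E)) := by
  simp [pj12]

@[simp] lemma pj13_tmul (x z : E) :
    pj13 (x ⊗ₜ[k] z) = x ⊗ₜ[k] ((1 : E) ⊗ₜ[k] z) := by
  simp [pj13]

@[simp] lemma pj23_tmul (t : E ⊗[k] E) :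
    pj23 t = (1 : E) ⊗ₜ[k] t := rfl

lemma pj12_mul (s t : E ⊗[k] E) : pj12 (s * t) = pj12 s * pj12 t := by
  induction s using TensorProduct.induction_on with
  | zero => simp only [tp2_zero_mul, map_zero, tp3_zero_mul]
  | tmul x y =>
    induction t using TensorProduct.induction_on with
    | zero => simp only [tp2_mul_zero, map_zero, tp3_mul_zero]
    | tmul x' y' => simp [Algebra.TensorProduct.tmul_mul_tmul]
    | add _ _ h1 h2 => simp only [tp2_mul_add, map_add, h1, h2, tp3_mul_add]
  | add _ _ h1 h2 => simp only [tp2_add_mul, map_add, h1, h2, tp3_add_mul]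

lemma pj23_mul (s t : E ⊗[k] E) : pj23 (s * t) = pj23 s * pj23 t := by
  simp only [pj23_tmul, Algebra.TensorProduct.tmul_mul_tmul, one_mul]

lemma pj12_one : pj12 (1 : E ⊗[k] E) = 1 := by
  simp [Algebra.TensorProduct.one_def]

lemma pj23_one : pj23 (1 : E ⊗[k] E) = 1 := by
  simp [Algebra.TensorProduct.one_def]

end AuxM2

section AuxM3
variable {M : Type*} [AddCommGroup M] [Module k M] [FiniteDimensional k M]

local notation "E" => Module.End k M

lemma m12_e2 (t : E ⊗[k] E) :
    m12 (C := M) (e2 M t) = e3 M (pj12 t) := by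
  induction t using TensorProduct.induction_on with
  | zero =>
    simp only [map_zero]
    ext a b c
    simp [m12]
  | tmul x y =>
    simp only [e2_tmul, pj12_tmul, e3_tmul]
    ext a b c
    simp [m12, e2_tmul, Module.End.one_eq_id]
  | add s t h1 h2 =>
    simp only [map_add, ← h1, ← h2]
    ext a b c
    simp [m12]

lemma m23_e2 (t : E ⊗[k] E) :
    m23 (A := M) (e2 M t) = e3 M (pj23 t) := by
  simp only [pj23_tmul, e3_tmul, Module.End.one_eq_id]
  ext a b c
  simp [m23]

lemma m13_e2 (t : E ⊗[k] E) :
    m13 (B := M) (e2 M t) = e3 M (pj13 t) := by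
  induction t using TensorProduct.induction_on with
  | zero =>
    simp only [map_zero]
    ext a b c
    simp [m13]
  | tmul x z =>
    simp only [e2_tmul, pj13_tmul, e3_tmul]
    ext a b c
    simp [m13, e2_tmul, Module.End.one_eq_id]
  | add s t h1 h2 =>
    simp only [map_add, ← h1, ← h2]
    ext a b c
    simp [m13]

end AuxM3

section AuxM4
variable {M : Type*} [AddCommGroup M] [Module k M] [FiniteDimensional k M]

local notation "E" => Module.End k M

/-- contract the first factor -/
noncomputable def cLf (w : Module.Dual k (Module.End k M)) :
    E ⊗[k] E →ₗ[k] E :=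
  (TensorProduct.lid k (Module.End k M)).toLinearMap ∘ₗ TensorProduct.map w LinearMap.id

/-- contract the second factor -/
noncomputable def cRf (w : Module.Dual k (Module.End k M)) :
    E ⊗[k] E →ₗ[k] E :=
  (TensorProduct.rid k (Module.End k M)).toLinearMap ∘ₗ TensorProduct.map LinearMap.id w

/-- contract both factors -/
noncomputable def scf (w w' : Module.Dual k (Module.End k M)) :
    E ⊗[k] E →ₗ[k] k :=
  (TensorProduct.lid k k).toLinearMap ∘ₗ TensorProduct.map w w'

/-- contract factors 1,2 of the triple -/
noncomputable def Kf (w w' : Module.Dual k (Module.End k M)) :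
    E ⊗[k] (E ⊗[k] E) →ₗ[k] E :=
  (TensorProduct.lid k (Module.End k M)).toLinearMap ∘ₗ TensorProduct.map w (cLf w')

/-- contract factors 2,3 of the triple -/
noncomputable def K2f (w w' : Module.Dual k (Module.End k M)) :
    E ⊗[k] (E ⊗[k] E) →ₗ[k] E :=
  (TensorProduct.rid k (Module.End k M)).toLinearMap ∘ₗ TensorProduct.map LinearMap.id (scf w w')

/-- contract factor 1 of the triple -/
noncomputable def C3f (w : Module.Dual k (Module.End k M)) :
    E ⊗[k] (E ⊗[k] E) →ₗ[k] E ⊗[k] E :=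
  (TensorProduct.lid k ((Module.End k M) ⊗[k] (Module.End k M))).toLinearMap ∘ₗ
    TensorProduct.map w LinearMap.id

/-- contract factor 3 of the triple -/
noncomputable def C4f (w : Module.Dual k (Module.End k M)) :
    E ⊗[k] (E ⊗[k] E) →ₗ[k] E ⊗[k] E :=
  TensorProduct.map LinearMap.id
    ((TensorProduct.rid k (Module.End k M)).toLinearMap ∘ₗ TensorProduct.map LinearMap.id w)

variable (w w' : Module.Dual k (Module.End k M))

@[simp] lemma cLf_tmul (x y : E) : cLf w (x ⊗ₜ[k] y) = w x • y := by simp [cLf]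
@[simp] lemma cRf_tmul (x y : E) : cRf w (x ⊗ₜ[k] y) = w y • x := by simp [cRf]
@[simp] lemma scf_tmul (x y : E) : scf w w' (x ⊗ₜ[k] y) = w x * w' y := by
  simp [scf, smul_eq_mul]
@[simp] lemma Kf_tmul (x y z : E) :
    Kf w w' (x ⊗ₜ[k] (y ⊗ₜ[k] z)) = (w x * w' y) • z := by
  simp [Kf, smul_smul, mul_comm]
@[simp] lemma K2f_tmul (x y z : E) :
    K2f w w' (x ⊗ₜ[k] (y ⊗ₜ[k] z)) = (w y * w' z) • x := by
  simp [K2f, scf, smul_eq_mul]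
@[simp] lemma C3f_tmul (x : E) (v : E ⊗[k] E) :
    C3f w (x ⊗ₜ[k] v) = w x • v := by simp [C3f]
@[simp] lemma C4f_tmul (x y z : E) :
    C4f w (x ⊗ₜ[k] (y ⊗ₜ[k] z)) = x ⊗ₜ[k] (w z • y) := by simp [C4f]

lemma Li1 (s t : E ⊗[k] E) :
    cLf w s * cLf w' t = Kf w w' (pj13 s * pj23 t) := by
  induction s using TensorProduct.induction_on with
  | zero => simp only [map_zero, zero_mul, tp3_zero_mul]
  | tmul x z =>
    induction t using TensorProduct.induction_on with
    | zero => simp only [map_zero, mul_zero, tp3_mul_zero]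
    | tmul y v =>
      simp [Algebra.TensorProduct.tmul_mul_tmul, smul_mul_assoc, mul_smul_comm, smul_smul,
        mul_comm]
    | add _ _ h1 h2 => simp only [map_add, mul_add, h1, h2, tp3_mul_add]
  | add _ _ h1 h2 => simp only [map_add, add_mul, h1, h2, tp3_add_mul]

lemma Lii1 (s t : E ⊗[k] E) :
    cRf w s * cRf w' t = K2f w w' (pj12 s * pj13 t) := by
  induction s using TensorProduct.induction_on with
  | zero => simp only [map_zero, zero_mul, tp3_zero_mul]
  | tmul x y =>
    induction t using TensorProduct.induction_on with
    | zero => simp only [map_zero, mul_zero, tp3_mul_zero]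
    | tmul p q =>
      simp [Algebra.TensorProduct.tmul_mul_tmul, smul_mul_assoc, mul_smul_comm, smul_smul,
        mul_comm]
    | add _ _ h1 h2 => simp only [map_add, mul_add, h1, h2, tp3_mul_add]
  | add _ _ h1 h2 => simp only [map_add, add_mul, h1, h2, tp3_add_mul]

end AuxM4

section AuxM5
variable {M : Type*} [AddCommGroup M] [Module k M] [FiniteDimensional k M]

local notation "E" => Module.End k M

variable (w w' : Module.Dual k (Module.End k M))

lemma key_r (a b : E) (s u : E ⊗[k] E) :
    (scf w w' (s * ((1 : E) ⊗ₜ[k] a) * u)) • b =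
      Kf w w' (pj12 s * ((1 : E) ⊗ₜ[k] (a ⊗ₜ[k] b)) * pj12 u) := by
  induction s using TensorProduct.induction_on with
  | zero => simp only [tp2_zero_mul, map_zero, zero_smul, tp3_zero_mul]
  | tmul p q =>
    induction u using TensorProduct.induction_on with
    | zero => simp only [tp2_mul_zero, map_zero, zero_smul, tp3_mul_zero]
    | tmul r v =>
      simp [Algebra.TensorProduct.tmul_mul_tmul, smul_smul]
    | add _ _ h1 h2 => simp only [tp2_mul_add, map_add, add_smul, h1, h2, tp3_mul_add]
  | add _ _ h1 h2 => simp only [tp2_add_mul, map_add, add_smul, h1, h2, tp3_add_mul]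

lemma key_l (a b : E) (s u : E ⊗[k] E) :
    (scf w w' (s * (b ⊗ₜ[k] (1 : E)) * u)) • a =
      K2f w w' (pj23 s * (a ⊗ₜ[k] (b ⊗ₜ[k] (1 : E))) * pj23 u) := by
  induction s using TensorProduct.induction_on with
  | zero => simp only [tp2_zero_mul, map_zero, zero_smul, pj23_tmul, tp3_zero_mul]
  | tmul p q =>
    induction u using TensorProduct.induction_on with
    | zero => simp only [tp2_mul_zero, map_zero, zero_smul, pj23_tmul, tp3_mul_zero]
    | tmul r v =>
      simp [Algebra.TensorProduct.tmul_mul_tmul, smul_smul]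
    | add _ _ h1 h2 => simp only [tp2_mul_add, map_add, add_smul, h1, h2, pj23_tmul,
        tp3_mul_add]
  | add _ _ h1 h2 => simp only [tp2_add_mul, map_add, add_smul, h1, h2, pj23_tmul,
      tp3_add_mul]

lemma Liii (s t u : E ⊗[k] E) :
    C3f w (pj23 s * pj12 t * pj23 u) = s * ((cLf w t) ⊗ₜ[k] (1 : E)) * u := by
  induction t using TensorProduct.induction_on with
  | zero => simp only [map_zero, tp3_mul_zero, tp3_zero_mul, zero_tmul,
      tp2_mul_zero, tp2_zero_mul]
  | tmul x y =>
    induction s using TensorProduct.induction_on with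
    | zero => simp only [map_zero, tp3_zero_mul, tp2_zero_mul]
    | tmul p q =>
      induction u using TensorProduct.induction_on with
      | zero => simp only [map_zero, tp3_mul_zero, tp2_mul_zero]
      | tmul r v =>
        simp only [pj23_tmul, pj12_tmul, cLf_tmul, Algebra.TensorProduct.tmul_mul_tmul,
          TensorProduct.smul_tmul', tp2_mul_smul, tp2_smul_mul, C3f_tmul, map_smul,
          one_mul, mul_one, smul_mul_assoc, mul_smul_comm]
      | add _ _ h1 h2 => simp only [map_add, tp3_mul_add, tp2_mul_add, h1, h2]
    | add _ _ h1 h2 => simp only [map_add, tp3_add_mul, tp2_add_mul, h1, h2]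
  | add _ _ h1 h2 => simp only [map_add, add_tmul, tp3_mul_add, tp3_add_mul,
      tp2_mul_add, tp2_add_mul, h1, h2]

lemma Liv (s t u : E ⊗[k] E) :
    C4f w (pj12 s * pj23 t * pj12 u) = s * ((1 : E) ⊗ₜ[k] (cRf w t)) * u := by
  induction t using TensorProduct.induction_on with
  | zero => simp only [map_zero, tp3_mul_zero, tp3_zero_mul, tmul_zero,
      tp2_mul_zero, tp2_zero_mul]
  | tmul x y =>
    induction s using TensorProduct.induction_on with
    | zero => simp only [map_zero, tp3_zero_mul, tp2_zero_mul]
    | tmul p q =>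
      induction u using TensorProduct.induction_on with
      | zero => simp only [map_zero, tp3_mul_zero, tp2_mul_zero]
      | tmul r v =>
        simp only [pj23_tmul, pj12_tmul, cRf_tmul, Algebra.TensorProduct.tmul_mul_tmul,
          TensorProduct.tmul_smul, tp2_mul_smul, tp2_smul_mul, C4f_tmul, map_smul,
          one_mul, mul_one, smul_mul_assoc, mul_smul_comm]
      | add _ _ h1 h2 => simp only [map_add, tp3_mul_add, tp2_mul_add, h1, h2]
    | add _ _ h1 h2 => simp only [map_add, tp3_add_mul, tp2_add_mul, h1, h2]
  | add _ _ h1 h2 => simp only [map_add, tmul_add, tp3_mul_add, tp3_add_mul,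
      tp2_mul_add, tp2_add_mul, h1, h2]

end AuxM5

section PhiAux
variable {M : Type*} [AddCommGroup M] [Module k M] [FiniteDimensional k M]
variable (Φ : M ⊗[k] M ≃ₗ[k] M ⊗[k] M)
local notation "E" => Module.End k M

/-- `Φ` as an element of `End M ⊗ End M`. -/
noncomputable def Tel : (Module.End k M) ⊗[k] (Module.End k M) := (e2 M).symm Φ.toLinearMap
/-- `Φ⁻¹` as an element of `End M ⊗ End M`. -/
noncomputable def Tel' : (Module.End k M) ⊗[k] (Module.End k M) := (e2 M).symm Φ.symm.toLinearMap
local notation "T" => Tel Φ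
local notation "T'" => Tel' Φ

lemma comp_symm_id : Φ.toLinearMap ∘ₗ Φ.symm.toLinearMap = LinearMap.id := by
  ext v; simp

lemma symm_comp_id : Φ.symm.toLinearMap ∘ₗ Φ.toLinearMap = LinearMap.id := by
  ext v; simp

lemma hTT' : (T : E ⊗[k] E) * T' = 1 := by
  apply (e2 M).injective
  rw [e2_mul, e2_one, Tel, Tel', LinearEquiv.apply_symm_apply, LinearEquiv.apply_symm_apply,
    Module.End.mul_eq_comp, comp_symm_id, Module.End.one_eq_id]

lemma hT'T : (T' : E ⊗[k] E) * T = 1 := by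
  apply (e2 M).injective
  rw [e2_mul, e2_one, Tel, Tel', LinearEquiv.apply_symm_apply, LinearEquiv.apply_symm_apply,
    Module.End.mul_eq_comp, symm_comp_id, Module.End.one_eq_id]

lemma deltaR_eq (x : E) :
    deltaR Φ x = e2 M (T' * ((1 : E) ⊗ₜ[k] x) * T) := by
  rw [e2_mul, e2_mul, e2_tmul, Tel, Tel', LinearEquiv.apply_symm_apply,
    LinearEquiv.apply_symm_apply, Module.End.one_eq_id]
  rfl

lemma deltaL_eq (x : E) :
    deltaL Φ x = e2 M (T * (x ⊗ₜ[k] (1 : E)) * T') := by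
  rw [e2_mul, e2_mul, e2_tmul, Tel, Tel', LinearEquiv.apply_symm_apply,
    LinearEquiv.apply_symm_apply, Module.End.one_eq_id]
  rfl

variable (ω ω' : Module.Dual k (Module.End k M))

lemma lam_eq : lam Φ ω = cLf ω T := rfl

lemma rho_eq : rho Φ ω = cRf ω T := rfl

lemma dualMulR_apply (x : E) :
    dualMulR Φ ω ω' x = scf ω ω' (T' * ((1 : E) ⊗ₜ[k] x) * T) := by
  simp only [dualMulR, LinearMap.coe_comp, Function.comp_apply, deltaR_eq,
    LinearEquiv.coe_coe, LinearEquiv.symm_apply_apply]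
  rfl

lemma dualMulL_apply (x : E) :
    dualMulL Φ ω ω' x = scf ω ω' (T * (x ⊗ₜ[k] (1 : E)) * T') := by
  simp only [dualMulL, LinearMap.coe_comp, Function.comp_apply, deltaL_eq,
    LinearEquiv.coe_coe, LinearEquiv.symm_apply_apply]
  rfl

lemma Li2 (t : E ⊗[k] E) :
    cLf (dualMulR Φ ω ω') t = Kf ω ω' (pj12 T' * pj23 t * pj12 T) := by
  induction t using TensorProduct.induction_on with
  | zero => simp only [map_zero, tp3_mul_zero, tp3_zero_mul]
  | tmul a b => rw [cLf_tmul, dualMulR_apply]; exact key_r ω ω' a b T' T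
  | add _ _ h1 h2 => simp only [map_add, tp3_mul_add, tp3_add_mul, h1, h2]

lemma Lii2 (t : E ⊗[k] E) :
    cRf (dualMulL Φ ω ω') t = K2f ω ω' (pj23 T * pj12 t * pj23 T') := by
  induction t using TensorProduct.induction_on with
  | zero => simp only [map_zero, tp3_mul_zero, tp3_zero_mul]
  | tmul a b => rw [cRf_tmul, dualMulL_apply]; exact key_l ω ω' a b T T'
  | add _ _ h1 h2 => simp only [map_add, tp3_mul_add, tp3_add_mul, h1, h2]

lemma hP (hPE : PE Φ.toLinearMap) :
    pj12 T * (pj13 T * pj23 T) = pj23 T * pj12 T := by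
  apply (e3 M).injective
  have hT : e2 M T = Φ.toLinearMap := (e2 M).apply_symm_apply _
  rw [e3_mul, e3_mul, e3_mul, ← m12_e2, ← m13_e2, ← m23_e2, hT,
    Module.End.mul_eq_comp, Module.End.mul_eq_comp, Module.End.mul_eq_comp]
  exact hPE

lemma h1 (hPE : PE Φ.toLinearMap) :
    pj13 T * pj23 T = pj12 T' * pj23 T * pj12 T := by
  have hp := hP Φ hPE
  calc pj13 T * pj23 T
      = (1 : E ⊗[k] (E ⊗[k] E)) * (pj13 T * pj23 T) := (tp3_one_mul _).symm
    _ = pj12 T' * pj12 T * (pj13 T * pj23 T) := by rw [← pj12_mul, hT'T, pj12_one]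
    _ = pj12 T' * (pj12 T * (pj13 T * pj23 T)) := tp3_mul_assoc _ _ _
    _ = pj12 T' * (pj23 T * pj12 T) := by rw [hp]
    _ = pj12 T' * pj23 T * pj12 T := (tp3_mul_assoc _ _ _).symm

lemma h2 (hPE : PE Φ.toLinearMap) :
    pj23 T * pj12 T * pj23 T' = pj12 T * pj13 T := by
  have hp := hP Φ hPE
  calc pj23 T * pj12 T * pj23 T'
      = pj12 T * (pj13 T * pj23 T) * pj23 T' := by rw [hp]
    _ = pj12 T * (pj13 T * (pj23 T * pj23 T')) := by
        rw [tp3_mul_assoc, tp3_mul_assoc]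
    _ = pj12 T * (pj13 T * (1 : E ⊗[k] (E ⊗[k] E))) := by rw [← pj23_mul, hTT', pj23_one]
    _ = pj12 T * pj13 T := by rw [tp3_mul_one]


end PhiAux

end PentagonEnd

/-- For a solution `Φ` of the pentagon equation on a finite-dimensional `M`:
(i) `λ(ω)λ(ω') = λ(ω *_r ω')`; (ii) `ρ(ω)ρ(ω') = ρ(ω *_l ω')`;
(iii) `Δ_l(λ(ω)) = (ω ⊗ id ⊗ id)(Φ₁₂ ∘ Φ₁₃)`; (iv) `Δ_r(ρ(ω)) = (id ⊗ id ⊗ ω)(Φ₁₃ ∘ Φ₂₃)`. -/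
theorem stmt13 {M : Type} [AddCommGroup M] [Module k M] [FiniteDimensional k M]
    (Φ : M ⊗[k] M ≃ₗ[k] M ⊗[k] M) (hPE : PE Φ.toLinearMap)
    (ω ω' : Module.Dual k (Module.End k M)) :
    lam Φ ω ∘ₗ lam Φ ω' = lam Φ (dualMulR Φ ω ω') ∧
    rho Φ ω ∘ₗ rho Φ ω' = rho Φ (dualMulL Φ ω ω') ∧
    deltaL Φ (lam Φ ω) =
      e2 M (TensorProduct.lid k ((Module.End k M) ⊗[k] (Module.End k M))
        (TensorProduct.map ω LinearMap.id
          ((e3 M).symm (m12 Φ.toLinearMap ∘ₗ m13 Φ.toLinearMap)))) ∧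
    deltaR Φ (rho Φ ω) =
      e2 M (TensorProduct.map LinearMap.id
        ((TensorProduct.rid k (Module.End k M)).toLinearMap ∘ₗ
          TensorProduct.map LinearMap.id ω)
        ((e3 M).symm (m13 Φ.toLinearMap ∘ₗ m23 Φ.toLinearMap))) := by
  have hT : e2 M (Tel Φ) = Φ.toLinearMap := (e2 M).apply_symm_apply _
  have hm1213 : (e3 M).symm (m12 Φ.toLinearMap ∘ₗ m13 Φ.toLinearMap) =
      pj12 (Tel Φ) * pj13 (Tel Φ) := by
    rw [LinearEquiv.symm_apply_eq, e3_mul, ← m12_e2, ← m13_e2, hT, Module.End.mul_eq_comp]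
  have hm1323 : (e3 M).symm (m13 Φ.toLinearMap ∘ₗ m23 Φ.toLinearMap) =
      pj13 (Tel Φ) * pj23 (Tel Φ) := by
    rw [LinearEquiv.symm_apply_eq, e3_mul, ← m13_e2, ← m23_e2, hT, Module.End.mul_eq_comp]
  refine ⟨?_, ?_, ?_, ?_⟩
  · rw [← Module.End.mul_eq_comp, lam_eq, lam_eq, lam_eq, Li1, Li2, h1 Φ hPE]
  · rw [← Module.End.mul_eq_comp, rho_eq, rho_eq, rho_eq, Lii1, Lii2, h2 Φ hPE]
  · rw [hm1213]
    have hc : TensorProduct.lid k ((Module.End k M) ⊗[k] (Module.End k M))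
        (TensorProduct.map ω LinearMap.id (pj12 (Tel Φ) * pj13 (Tel Φ))) =
        C3f ω (pj12 (Tel Φ) * pj13 (Tel Φ)) := rfl
    rw [hc, ← h2 Φ hPE, Liii, lam_eq, deltaL_eq]
  · rw [hm1323]
    have hc : TensorProduct.map LinearMap.id
        ((TensorProduct.rid k (Module.End k M)).toLinearMap ∘ₗ
          TensorProduct.map LinearMap.id ω)
        (pj13 (Tel Φ) * pj23 (Tel Φ)) =
        C4f ω (pj13 (Tel Φ) * pj23 (Tel Φ)) := rfl
    rw [hc, h1 Φ hPE, Liv, rho_eq, deltaR_eq]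


end
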